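/- Let dA, dB, dC ≥ 1 and let ψ, φ : EuclideanSpace ℂ (Fin dA × Fin dB × Fin dC) be unit vectors with ⟪φ, ψ⟫ = 0. Then there exists an orthonormal basis (u_i)_{i : Fin dA} of EuclideanSpace ℂ (Fin dA) and, for each i : Fin dA, an orthonormal basis (v^i_j)_{j : Fin dB} of EuclideanSpace ℂ (Fin dB), such that for all i, j the doubly conditional states satisfy ⟪φ^{|u_i, v^i_j}, ψ^{|u_i, v^i_j}⟫ = 0. -/

import Mathlib

local notation "⟪" x ", " y "⟫" => @inner ℂ _ _ x y

/-- The doubly conditional state of a tripartite vector `ψ` relative to vectors `u` and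
`v` on the first two subsystems: `(condState2 ψ u v) c = ∑ a b, conj (u a) * conj (v b) * ψ (a, b, c)`. -/
noncomputable def condState2 {dA dB dC : ℕ}
    (ψ : EuclideanSpace ℂ (Fin dA × Fin dB × Fin dC))
    (u : EuclideanSpace ℂ (Fin dA)) (v : EuclideanSpace ℂ (Fin dB)) :
    EuclideanSpace ℂ (Fin dC) :=
  WithLp.toLp 2 fun c => ∑ a : Fin dA, ∑ b : Fin dB,
    (starRingEnd ℂ) (u a) * (starRingEnd ℂ) (v b) * ψ (a, b, c)

open Complex ComplexConjugate Finset Module Submodule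

/-!
The map `u ↦ ⟪φ^{|u}, ψ^{|u}⟫` is the quadratic form `u ↦ ⟪u, G u⟫` of the matrix
`G = Ψ Φᴴ` (where `Ψ a k = ψ (a, k)`), whose trace is `⟪φ, ψ⟫ = 0`. A traceless operator `T`
has an orthonormal basis on which its quadratic form vanishes: by the Toeplitz–Hausdorff argument
on two-dimensional subspaces, the average `trace T / n = 0` of the diagonal entries in any
orthonormal basis is a value `⟪x, T x⟫` at a unit vector `x`, and the compression of `T` to
`x^⊥` is again traceless. Apply this to `φ, ψ` as states of `A ⊗ BC`, and then to each pair of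
conditional states `φ^{|u_i}, ψ^{|u_i}` of `B ⊗ C`; finally `ψ^{|u, v} = (ψ^{|u})^{|v}`.
-/

lemma exists_norm_eq_one_im_mul_conj_eq_zero (p q L : ℂ) :
    ∃ z : ℂ, ‖z‖ = 1 ∧ ((z * p + conj z * q) * conj L).im = 0 := by
  set w := p * conj L - conj q * L
  -- `Im ((z p + z̄ q) L̄) = Im (z w)`, and the phase `z = exp (-i arg w)` makes `z w` real.
  have hw : exp (-arg w * I) * w = ‖w‖ := by
    nth_rw 2 [← norm_mul_exp_arg_mul_I w]
    rw [mul_left_comm, ← exp_add, neg_mul, neg_add_cancel, exp_zero, mul_one]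
  refine ⟨exp (-arg w * I), by rw [← ofReal_neg]; exact norm_exp_ofReal_mul_I _, ?_⟩
  have him : ((exp (-arg w * I) * p + conj (exp (-arg w * I)) * q) * conj L).im
      = (exp (-arg w * I) * w).im := by
    simp only [w, mul_im, mul_re, add_im, add_re, sub_im, sub_re, conj_re, conj_im]
    ring
  rw [him, hw, ofReal_im]

lemma exists_mem_Icc_sqrt_mul_eq (a c : ℝ) (ha : 0 ≤ a) {t : ℝ} (ht0 : 0 ≤ t) (ht1 : t ≤ 1) :
    ∃ s ∈ Set.Icc (0 : ℝ) 1, √(s * (1 - s)) * c = (t - s) * a := by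
  have hF : ContinuousOn (fun s : ℝ => (t - s) * a - √(s * (1 - s)) * c) (Set.Icc 0 1) := by
    fun_prop
  obtain ⟨s, hs, hFs⟩ := intermediate_value_Icc' zero_le_one hF
    (show (0 : ℝ) ∈ Set.Icc _ _ from ⟨by simp; nlinarith, by simp; positivity⟩)
  exact ⟨s, hs, by simp only at hFs; linarith⟩

section finCons

variable {𝕜 F : Type*} [RCLike 𝕜] [NormedAddCommGroup F] [InnerProductSpace 𝕜 F]

theorem orthonormal_finCons {n : ℕ} {x : F} {v : Fin n → F} (hx : ‖x‖ = 1)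
    (hv : Orthonormal 𝕜 v) (hxv : ∀ j, inner 𝕜 x (v j) = 0) :
    Orthonormal 𝕜 (Fin.cons x v : Fin (n + 1) → F) := by
  classical
  rw [orthonormal_iff_ite] at hv ⊢
  intro i j
  cases i using Fin.cases <;> cases j using Fin.cases <;>
    simp [hv, hxv, inner_self_eq_norm_sq_to_K, hx, inner_eq_zero_symm.1 (hxv _),
      (Fin.succ_ne_zero _).symm]

theorem exists_orthonormalBasis_finCons [FiniteDimensional 𝕜 F] {n : ℕ} {x : F} (hx : ‖x‖ = 1)
    (c : OrthonormalBasis (Fin n) 𝕜 (𝕜 ∙ x)ᗮ) :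
    ∃ b : OrthonormalBasis (Fin (n + 1)) 𝕜 F, ⇑b = Fin.cons x fun j => (c j : F) := by
  have hon : Orthonormal 𝕜 (Fin.cons x fun j => (c j : F) : Fin (n + 1) → F) :=
    orthonormal_finCons hx (c.orthonormal.comp_linearIsometry (𝕜 ∙ x)ᗮ.subtypeₗᵢ)
      fun j => mem_orthogonal_singleton_iff_inner_right.1 (c j).2
  have hcard : Fintype.card (Fin (n + 1)) = finrank 𝕜 F := by
    rw [← (𝕜 ∙ x).finrank_add_finrank_orthogonal,
      finrank_span_singleton (by simp [← norm_ne_zero_iff, hx]), finrank_eq_card_basis c.toBasis]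
    simp [add_comm]
  exact ⟨.mk hon (hon.linearIndependent.span_eq_top_of_card_eq_finrank' hcard).ge,
    OrthonormalBasis.coe_mk _ _⟩

end finCons

section InnerProductSpace

variable {E : Type*} [NormedAddCommGroup E] [InnerProductSpace ℂ E]

theorem exists_norm_eq_one_mem_span_pair_inner_map_self_eq (T : E →ₗ[ℂ] E) {e f : E}
    (he : ‖e‖ = 1) (hf : ‖f‖ = 1) (hef : ⟪e, f⟫ = 0) {t : ℝ} (ht0 : 0 ≤ t) (ht1 : t ≤ 1) :
    ∃ x, ‖x‖ = 1 ∧ x ∈ span ℂ {e, f} ∧ ⟪x, T x⟫ = (1 - t) * ⟪e, T e⟫ + t * ⟪f, T f⟫ := by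
  -- For `x = √(1 - s) e + √s z f` with `‖z‖ = 1`, `⟪x, T x⟫` is `(1 - s) ⟪e, T e⟫ + s ⟪f, T f⟫`
  -- plus `√(s (1 - s)) X`. Choosing `z` makes `X` a real multiple of `L`; then `s` comes from the
  -- intermediate value theorem.
  set L := ⟪f, T f⟫ - ⟪e, T e⟫
  rcases eq_or_ne L 0 with hL | hL
  · exact ⟨e, he, subset_span (by simp), by linear_combination (-t : ℂ) * hL⟩
  obtain ⟨z, hz, hzim⟩ := exists_norm_eq_one_im_mul_conj_eq_zero ⟪e, T f⟫ ⟪f, T e⟫ L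
  set X := z * ⟪e, T f⟫ + conj z * ⟪f, T e⟫
  obtain ⟨s, ⟨hs0, hs1⟩, hs⟩ :=
    exists_mem_Icc_sqrt_mul_eq (‖L‖ ^ 2) (X * conj L).re (by positivity) ht0 ht1
  have hX : (√(s * (1 - s)) : ℂ) * X = (t - s) * L := by
    have hXL : X * conj L = ((X * conj L).re : ℂ) := (re_add_im _).symm.trans (by simp [hzim])
    apply mul_right_cancel₀ ((map_ne_zero (starRingEnd ℂ)).2 hL)
    rw [mul_assoc, hXL, mul_assoc, mul_conj', ← ofReal_pow, ← ofReal_mul, ← ofReal_sub,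
      ← ofReal_mul, hs, ofReal_mul, ofReal_sub]
  refine ⟨(√(1 - s) : ℂ) • e + ((√s : ℂ) * z) • f, ?_, ?_, ?_⟩
  · have h : ‖(√(1 - s) : ℂ) • e + ((√s : ℂ) * z) • f‖ ^ 2 = 1 := by
      rw [norm_add_sq (𝕜 := ℂ), inner_smul_left, inner_smul_right, hef]
      simp [norm_smul, he, hf, hz, Real.sq_sqrt, hs0, hs1]
    rwa [pow_eq_one_iff_of_nonneg (norm_nonneg _) two_ne_zero] at h
  · exact add_mem (smul_mem _ _ (subset_span (by simp))) (smul_mem _ _ (subset_span (by simp)))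
  · have h1 : (√(1 - s) : ℂ) * √(1 - s) = 1 - s := by
      rw [← ofReal_mul, Real.mul_self_sqrt (by linarith)]; push_cast; ring
    have h2 : (√s : ℂ) * √s = s := by rw [← ofReal_mul, Real.mul_self_sqrt hs0]
    have h3 : conj z * z = 1 := by rw [conj_mul', hz]; simp
    have h4 : (√(1 - s) : ℂ) * √s = √(s * (1 - s)) := by
      rw [← ofReal_mul, ← Real.sqrt_mul (by linarith), mul_comm]
    simp only [map_add, map_smul, inner_add_left, inner_add_right, inner_smul_left,
      inner_smul_right, map_mul, conj_ofReal]
    linear_combination ⟪e, T e⟫ * h1 + ⟪f, T f⟫ * h2 + ⟪f, T f⟫ * (√s : ℂ) ^ 2 * h3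
      + (z * ⟪e, T f⟫ + conj z * ⟪f, T e⟫) * h4 + hX

theorem exists_norm_eq_one_mem_span_inner_map_self_eq_average (T : E →ₗ[ℂ] E) :
    ∀ {k : ℕ} {v : Fin (k + 1) → E}, Orthonormal ℂ v → ∃ x, ‖x‖ = 1 ∧
      x ∈ span ℂ (Set.range v) ∧ ⟪x, T x⟫ = (∑ i, ⟪v i, T (v i)⟫) / (k + 1)
  | 0, v, hv => ⟨v 0, hv.1 0, subset_span ⟨0, rfl⟩, by simp⟩
  | k + 1, v, hv => by
    obtain ⟨y, hy, hy_span, hy_val⟩ :=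
      exists_norm_eq_one_mem_span_inner_map_self_eq_average T
        (hv.comp _ (Fin.castSucc_injective _))
    have hy_last : ⟪y, v (Fin.last (k + 1))⟫ = 0 := by
      have : span ℂ (Set.range (v ∘ Fin.castSucc)) ≤ (ℂ ∙ v (Fin.last (k + 1)))ᗮ :=
        span_le.2 <| by
          rintro _ ⟨i, rfl⟩
          exact mem_orthogonal_singleton_iff_inner_left.2 (hv.2 (Fin.castSucc_lt_last i).ne)
      exact mem_orthogonal_singleton_iff_inner_left.1 (this hy_span)
    obtain ⟨x, hx, hx_span, hx_val⟩ := exists_norm_eq_one_mem_span_pair_inner_map_self_eq T hy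
      (hv.1 _) hy_last (t := 1 / (k + 2)) (by positivity)
      (div_le_one_of_le₀ (by linarith) (by positivity))
    refine ⟨x, hx, span_le.2 ?_ hx_span, ?_⟩
    · exact Set.insert_subset_iff.2 ⟨span_mono (Set.range_comp_subset_range _ _) hy_span,
        Set.singleton_subset_iff.2 (subset_span ⟨_, rfl⟩)⟩
    · have hk : (k : ℂ) + 1 + 1 ≠ 0 := by norm_cast
      rw [hx_val, hy_val, Fin.sum_univ_castSucc (fun i => ⟪v i, T (v i)⟫)]
      push_cast
      rw [show (k : ℂ) + 2 = k + 1 + 1 by ring]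
      simp only [Function.comp_apply]
      field_simp
      ring

noncomputable def LinearMap.compression (K : Submodule ℂ E) [K.HasOrthogonalProjection]
    (T : E →ₗ[ℂ] E) : K →ₗ[ℂ] K :=
  K.orthogonalProjectionOnto.toLinearMap ∘ₗ T ∘ₗ K.subtype

theorem LinearMap.inner_compression (K : Submodule ℂ E) [K.HasOrthogonalProjection]
    (T : E →ₗ[ℂ] E) (y z : K) : ⟪y, T.compression K z⟫ = ⟪(y : E), T z⟫ := by
  simp [LinearMap.compression]

variable [FiniteDimensional ℂ E]

theorem LinearMap.exists_norm_eq_one_inner_map_self_eq_zero (T : E →ₗ[ℂ] E)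
    (hT : LinearMap.trace ℂ E T = 0) {n : ℕ} (hn : finrank ℂ E = n + 1) :
    ∃ x : E, ‖x‖ = 1 ∧ ⟪x, T x⟫ = 0 := by
  obtain ⟨x, hx, -, hxT⟩ := exists_norm_eq_one_mem_span_inner_map_self_eq_average T
    ((stdOrthonormalBasis ℂ E).reindex (finCongr hn)).orthonormal
  exact ⟨x, hx, by rw [hxT, ← LinearMap.trace_eq_sum_inner, hT, zero_div]⟩

theorem LinearMap.trace_compression_orthogonal_span_singleton (T : E →ₗ[ℂ] E) {x : E}
    (hx : ‖x‖ = 1) :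
    LinearMap.trace ℂ _ (T.compression (ℂ ∙ x)ᗮ) = LinearMap.trace ℂ E T - ⟪x, T x⟫ := by
  obtain ⟨b, hb⟩ := exists_orthonormalBasis_finCons hx (stdOrthonormalBasis ℂ (ℂ ∙ x)ᗮ)
  rw [LinearMap.trace_eq_sum_inner T b, LinearMap.trace_eq_sum_inner _ (stdOrthonormalBasis ℂ _),
    hb, Fin.sum_univ_succ]
  simp only [Fin.cons_zero, Fin.cons_succ, LinearMap.inner_compression]
  ring

theorem LinearMap.exists_orthonormalBasis_inner_map_self_eq_zero (T : E →ₗ[ℂ] E)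
    (hT : LinearMap.trace ℂ E T = 0) {n : ℕ} (hn : finrank ℂ E = n) :
    ∃ w : OrthonormalBasis (Fin n) ℂ E, ∀ i, ⟪w i, T (w i)⟫ = 0 := by
  induction n generalizing E with
  | zero => exact ⟨(stdOrthonormalBasis ℂ E).reindex (finCongr hn), fun i => i.elim0⟩
  | succ n ih =>
    obtain ⟨x, hx, hxT⟩ := T.exists_norm_eq_one_inner_map_self_eq_zero hT hn
    have : Fact (finrank ℂ E = n + 1) := ⟨hn⟩
    obtain ⟨w, hw⟩ := ih (T.compression (ℂ ∙ x)ᗮ)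
      (by rw [T.trace_compression_orthogonal_span_singleton hx, hT, hxT, sub_zero])
      (finrank_orthogonal_span_singleton (by simp [← norm_ne_zero_iff, hx]))
    obtain ⟨b, hb⟩ := exists_orthonormalBasis_finCons hx w
    refine ⟨b, Fin.cases ?_ fun i => ?_⟩
    · rwa [hb, Fin.cons_zero]
    · rw [hb, Fin.cons_succ, ← LinearMap.inner_compression]
      exact hw i

end InnerProductSpace

section CondState

variable {ι κ : Type*} [Fintype ι] [Fintype κ]

noncomputable def condState (ψ : EuclideanSpace ℂ (ι × κ)) (u : EuclideanSpace ℂ ι) :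
    EuclideanSpace ℂ κ :=
  WithLp.toLp 2 fun k => ∑ a, conj (u a) * ψ (a, k)

noncomputable def condStateGram (φ ψ : EuclideanSpace ℂ (ι × κ)) : Matrix ι ι ℂ :=
  Matrix.of fun a a' => ∑ k, ψ (a, k) * conj (φ (a', k))

lemma inner_condState [DecidableEq ι] (φ ψ : EuclideanSpace ℂ (ι × κ)) (u : EuclideanSpace ℂ ι) :
    ⟪condState φ u, condState ψ u⟫ = ⟪u, Matrix.toEuclideanLin (condStateGram φ ψ) u⟫ := by
  simp only [condState, condStateGram, PiLp.inner_apply, Matrix.toLpLin_apply, Matrix.mulVec,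
    dotProduct, Matrix.of_apply, RCLike.inner_apply, map_sum, map_mul, conj_conj, mul_sum, sum_mul]
  rw [sum_comm_cycle]
  refine sum_congr rfl fun a _ => ?_
  rw [sum_comm]
  exact sum_congr rfl fun _ _ => sum_congr rfl fun _ _ => by ring

lemma trace_toEuclideanLin_condStateGram [DecidableEq ι] (φ ψ : EuclideanSpace ℂ (ι × κ)) :
    LinearMap.trace ℂ _ (Matrix.toEuclideanLin (condStateGram φ ψ)) = ⟪φ, ψ⟫ := by
  rw [LinearMap.trace_eq_sum_inner _ (EuclideanSpace.basisFun ι ℂ)]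
  simp [condStateGram, Matrix.toLpLin_apply, PiLp.inner_apply, Fintype.sum_prod_type, mul_comm]

theorem exists_orthonormalBasis_condState_orthogonal [DecidableEq ι]
    {φ ψ : EuclideanSpace ℂ (ι × κ)} (h : ⟪φ, ψ⟫ = 0) :
    ∃ u : OrthonormalBasis ι ℂ (EuclideanSpace ℂ ι),
      ∀ i, ⟪condState φ (u i), condState ψ (u i)⟫ = 0 := by
  obtain ⟨w, hw⟩ :=
    (Matrix.toEuclideanLin (condStateGram φ ψ)).exists_orthonormalBasis_inner_map_self_eq_zero
      (by rw [trace_toEuclideanLin_condStateGram, h]) (finrank_euclideanSpace (𝕜 := ℂ))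
  refine ⟨w.reindex (Fintype.equivFin ι).symm, fun i => ?_⟩
  rw [inner_condState, OrthonormalBasis.reindex_apply]
  exact hw _

end CondState

theorem condState2_eq_condState_condState {dA dB dC : ℕ}
    (ψ : EuclideanSpace ℂ (Fin dA × Fin dB × Fin dC)) (u : EuclideanSpace ℂ (Fin dA))
    (v : EuclideanSpace ℂ (Fin dB)) : condState2 ψ u v = condState (condState ψ u) v := by
  ext c
  simp only [condState2, condState, PiLp.toLp_apply, mul_sum]
  rw [sum_comm]
  exact sum_congr rfl fun _ _ => sum_congr rfl fun _ _ => by ring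

theorem exists_orthonormalBases_condState2_orthogonal_general
    (dA dB dC : ℕ)
    (ψ φ : EuclideanSpace ℂ (Fin dA × Fin dB × Fin dC))
    (horth : ⟪φ, ψ⟫ = 0) :
    ∃ (u : OrthonormalBasis (Fin dA) ℂ (EuclideanSpace ℂ (Fin dA)))
      (v : Fin dA → OrthonormalBasis (Fin dB) ℂ (EuclideanSpace ℂ (Fin dB))),
      ∀ (i : Fin dA) (j : Fin dB),
        ⟪condState2 φ (u i) (v i j), condState2 ψ (u i) (v i j)⟫ = 0 := by
  obtain ⟨u, hu⟩ := exists_orthonormalBasis_condState_orthogonal horth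
  choose v hv using fun i => exists_orthonormalBasis_condState_orthogonal (hu i)
  exact ⟨u, v, fun i j => by simpa only [condState2_eq_condState_condState] using hv i j⟩

/-- Multipartite Walgate et al.: for two orthogonal tripartite pure states there are an
orthonormal basis `(u i)` for Alice and, for each outcome `i`, an orthonormal basis
`(v i j)` for Bob, such that all resulting doubly conditional states of Charlie's system
are orthogonal. -/
theorem exists_orthonormalBases_condState2_orthogonal
    (dA dB dC : ℕ) (hdA : 1 ≤ dA) (hdB : 1 ≤ dB) (hdC : 1 ≤ dC)
    (ψ φ : EuclideanSpace ℂ (Fin dA × Fin dB × Fin dC))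
    (hψ : ‖ψ‖ = 1) (hφ : ‖φ‖ = 1) (horth : ⟪φ, ψ⟫ = 0) :
    ∃ (u : OrthonormalBasis (Fin dA) ℂ (EuclideanSpace ℂ (Fin dA)))
      (v : Fin dA → OrthonormalBasis (Fin dB) ℂ (EuclideanSpace ℂ (Fin dB))),
      ∀ (i : Fin dA) (j : Fin dB),
        ⟪condState2 φ (u i) (v i j), condState2 ψ (u i) (v i j)⟫ = 0 :=
  exists_orthonormalBases_condState2_orthogonal_general dA dB dC ψ φ horth
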